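/- arXiv:2011.10234 — 3 statements merged into one kernel-verified Lean document; each statement's English description precedes it below -/
import Mathlib

section
/- For D ≥ 4, k = -1, and Q ≠ 0 with M = 0, the unique positive solution of -r^(2(D-3)) + (D-2)·Q^2 = 0 is r_p^(D-3) = √(D-2)·|Q|, and at this radius V''(r_p) = 4(D-3)/r_p^4 > 0. -/
/-!
Write `n = D - 3`, so `2(D - 2) = 2n + 2` and the photon-sphere equation reads `r ^ (2n) = b²` with
`b = √(n + 1) |Q|`; for `r, b > 0` this is `r ^ n = b`. Differentiating twice,
`V'' = -6 / r⁴ + m (m + 1) Q² / r ^ (m + 2)` with `m = 2n + 2`, and substituting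
`r ^ (2n) = (n + 1) Q²` into the second term leaves `(-6 + 2 (2n + 3)) / r⁴ = 4n / r⁴`.
-/

lemma hasDerivAt_sub_inv_sq_add_div_pow (C Q : ℝ) (m : ℕ) {x : ℝ} (hx : x ≠ 0) :
    HasDerivAt (fun s : ℝ => C - 1 / s ^ 2 + Q ^ 2 / s ^ m)
      (2 * x ^ (-3 : ℤ) - m * Q ^ 2 * x ^ (-(m : ℤ) - 1)) x := by
  have hzpow : (fun s : ℝ => C - 1 / s ^ 2 + Q ^ 2 / s ^ m)
      = fun s => C - s ^ (-2 : ℤ) + Q ^ 2 * s ^ (-(m : ℤ)) := by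
    funext s
    simp [zpow_neg, div_eq_mul_inv]
  rw [hzpow]
  refine (((hasDerivAt_const x C).sub (hasDerivAt_zpow (-2) x (.inl hx))).add
    ((hasDerivAt_zpow (-(m : ℤ)) x (.inl hx)).const_mul (Q ^ 2))).congr_deriv ?_
  push_cast
  ring

lemma hasDerivAt_two_zpow_sub_mul_zpow (Q : ℝ) (m : ℕ) {x : ℝ} (hx : x ≠ 0) :
    HasDerivAt (fun s : ℝ => 2 * s ^ (-3 : ℤ) - m * Q ^ 2 * s ^ (-(m : ℤ) - 1))
      (-6 * x ^ (-4 : ℤ) + m * (m + 1) * Q ^ 2 * x ^ (-(m : ℤ) - 2)) x := by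
  refine (((hasDerivAt_zpow (-3) x (.inl hx)).const_mul 2).sub
    ((hasDerivAt_zpow (-(m : ℤ) - 1) x (.inl hx)).const_mul (m * Q ^ 2))).congr_deriv ?_
  rw [show -(m : ℤ) - 1 - 1 = -(m : ℤ) - 2 by ring]
  push_cast
  ring

lemma deriv_deriv_sub_inv_sq_add_div_pow (C Q : ℝ) (m : ℕ) {x : ℝ} (hx : x ≠ 0) :
    deriv (deriv fun s : ℝ => C - 1 / s ^ 2 + Q ^ 2 / s ^ m) x
      = -6 / x ^ 4 + m * (m + 1) * Q ^ 2 / x ^ (m + 2) := by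
  have hderiv : deriv (fun s : ℝ => C - 1 / s ^ 2 + Q ^ 2 / s ^ m)
      =ᶠ[nhds x] fun s => 2 * s ^ (-3 : ℤ) - m * Q ^ 2 * s ^ (-(m : ℤ) - 1) := by
    filter_upwards [eventually_ne_nhds hx] with s hs
    exact (hasDerivAt_sub_inv_sq_add_div_pow C Q m hs).deriv
  rw [hderiv.deriv_eq, (hasDerivAt_two_zpow_sub_mul_zpow Q m hx).deriv,
    show -(m : ℤ) - 2 = -((m + 2 : ℕ) : ℤ) by push_cast; ring,
    show (-4 : ℤ) = -((4 : ℕ) : ℤ) by rfl]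
  simp only [zpow_neg, zpow_natCast]
  ring

lemma deriv_deriv_sub_inv_sq_add_div_pow_of_pow_eq (C Q : ℝ) (n : ℕ) {x : ℝ} (hx : x ≠ 0)
    (hQ : Q ≠ 0) (hxQ : x ^ (2 * n) = (n + 1) * Q ^ 2) :
    deriv (deriv fun s : ℝ => C - 1 / s ^ 2 + Q ^ 2 / s ^ (2 * (n + 1))) x = 4 * n / x ^ 4 := by
  rw [deriv_deriv_sub_inv_sq_add_div_pow C Q _ hx, show 2 * (n + 1) + 2 = 2 * n + 4 by ring,
    pow_add, hxQ]
  have : x ^ 4 ≠ 0 := pow_ne_zero 4 hx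
  field_simp
  push_cast
  ring

lemma pow_two_mul_eq_sq_iff {r b : ℝ} (hr : 0 ≤ r) (hb : 0 ≤ b) {n : ℕ} (hn : n ≠ 0) :
    r ^ (2 * n) = b ^ 2 ↔ r = b ^ (n⁻¹ : ℝ) := by
  rw [pow_mul', pow_left_inj₀ (pow_nonneg hr n) hb two_ne_zero,
    Real.eq_rpow_inv hr hb (Nat.cast_ne_zero.2 hn), Real.rpow_natCast]

/-- For `k = -1`, `M = 0`, `Q ≠ 0`, the unique positive solution of
`-r^(2(D-3)) + (D-2) Q² = 0` is `r_p^(D-3) = √(D-2) |Q|`, and at this radius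
`V''(r_p) = 4(D-3)/r_p⁴ > 0`. -/
theorem stmt7 (D : ℕ) (hD : 4 ≤ D) (Λ Q : ℝ) (hQ : Q ≠ 0) :
    (((Real.sqrt ((D:ℝ)-2) * |Q|) ^ ((1:ℝ)/((D:ℝ)-3)))^(D-3)
        = Real.sqrt ((D:ℝ)-2) * |Q|)
    ∧ (∀ r : ℝ, 0 < r →
        (-(r^(2*(D-3))) + ((D:ℝ)-2)*Q^2 = 0
          ↔ r = (Real.sqrt ((D:ℝ)-2) * |Q|) ^ ((1:ℝ)/((D:ℝ)-3))))
    ∧ deriv (deriv (fun s : ℝ =>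
          -2*Λ/(((D:ℝ)-2)*((D:ℝ)-1)) - 1/s^2 + Q^2/s^(2*(D-2))))
        ((Real.sqrt ((D:ℝ)-2) * |Q|) ^ ((1:ℝ)/((D:ℝ)-3)))
      = 4*((D:ℝ)-3)/((Real.sqrt ((D:ℝ)-2) * |Q|) ^ ((1:ℝ)/((D:ℝ)-3)))^4
    ∧ 0 < 4*((D:ℝ)-3)/((Real.sqrt ((D:ℝ)-2) * |Q|) ^ ((1:ℝ)/((D:ℝ)-3)))^4 := by
  obtain ⟨n, rfl⟩ : ∃ n, D = n + 3 := ⟨D - 3, by omega⟩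
  have hn : n ≠ 0 := by omega
  rw [show n + 3 - 3 = n by omega, show n + 3 - 2 = n + 1 by omega,
    show ((n + 3 : ℕ) : ℝ) - 3 = n by push_cast; ring,
    show ((n + 3 : ℕ) : ℝ) - 2 = n + 1 by push_cast; ring, one_div]
  set b := √((n : ℝ) + 1) * |Q|
  have hb : 0 < b := mul_pos (Real.sqrt_pos.2 (by positivity)) (abs_pos.2 hQ)
  have hb2 : b ^ 2 = (n + 1) * Q ^ 2 := by
    rw [mul_pow, Real.sq_sqrt (by positivity), sq_abs]
  have hrp : 0 < b ^ (n⁻¹ : ℝ) := Real.rpow_pos_of_pos hb _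
  have hroot : (b ^ (n⁻¹ : ℝ)) ^ n = b := Real.rpow_inv_natCast_pow hb.le hn
  refine ⟨hroot, fun r hr => ?_, ?_, by positivity⟩
  · rw [neg_add_eq_zero, ← hb2, pow_two_mul_eq_sq_iff hr.le hb.le hn]
  · refine deriv_deriv_sub_inv_sq_add_div_pow_of_pow_eq _ Q n hrp.ne' hQ ?_
    rw [pow_mul', hroot, hb2]
end

section
/- Let γ_{ij}(x) be a Riemannian metric on an (D-2)-dimensional manifold Σ and consider the metric g = -f(r)dt^2 + h(r)dr^2 + r^2 γ_{ij}(x)dx^i dx^j on M = ℝ × ℝ_{>0} × Σ. Then the symmetric tensor K_{ab} = r^4 γ_{ab} (where γ_{ab} = γ_{ij}(dx^i)_a(dx^j)_b) satisfies the rank-2 Killing tensor equation ∇_{(c}K_{ab)} = 0, where ∇ is the Levi-Civita connection of g. -/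
/-!
Coordinates are `inl 0 = t`, `inl 1 = r`, `inr i = xⁱ`. Only the `Σ`-block of `K` is nonzero,
so only index triples with at least two `Σ`-indices and no `t`-index contribute. For `(r, i, j)`
the equation balances `∂_r (r⁴ γ_ij) = 4 r³ γ_ij` against `2 (Γ^l_{ri} K_{jl} + Γ^l_{jr} K_{il})`
with `Γ^l_{ri} = δ^l_i / r`, which is `4 r³ γ_ij` exactly for the power `r⁴`. For three
`Σ`-indices the equation is `r⁴` times the Killing equation of `γ` for itself, which holds
because the Koszul formula says that the metric is parallel.
-/

open Sum

theorem Sum.fin_two_trichotomy {β : Type*} (σ : Fin 2 ⊕ β) :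
    σ = inl 0 ∨ σ = inl 1 ∨ ∃ b, σ = inr b := by
  rcases σ with a | b
  · fin_cases a <;> simp
  · exact .inr (.inr ⟨b, rfl⟩)

theorem fderiv_const_mul_field {𝕜 E : Type*} [NontriviallyNormedField 𝕜] [NormedAddCommGroup E]
    [NormedSpace 𝕜 E] (c : 𝕜) (f : E → 𝕜) (x : E) :
    fderiv 𝕜 (fun y => c * f y) x = c • fderiv 𝕜 f x :=
  congrFun (fderiv_const_smul_field c) x

theorem cyclic_sum_deriv_eq_of_koszul {ι 𝕜 : Type*} [Fintype ι] [Field 𝕜] [NeZero (2 : 𝕜)]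
    (g : ι → ι → 𝕜) (dg Γ : ι → ι → ι → 𝕜) (hdg : ∀ k i j, dg k i j = dg k j i)
    (hKoszul : ∀ i j m, ∑ l, Γ l i j * g m l = (dg i j m + dg j i m - dg m i j) / 2)
    (k i j : ι) :
    dg k i j + dg i j k + dg j k i
      = 2 * (∑ l, Γ l k i * g j l + ∑ l, Γ l i j * g k l + ∑ l, Γ l j k * g i l) := by
  rw [hKoszul, hKoszul, hKoszul, hdg i k j, hdg j i k, hdg k j i]
  field_simp
  ring

section WarpedProduct

variable {n : ℕ} {γ : (Fin n → ℝ) → Fin n → Fin n → ℝ}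
  {Γ : ℝ → (Fin n → ℝ) → (Fin 2 ⊕ Fin n) → (Fin 2 ⊕ Fin n) → (Fin 2 ⊕ Fin n) → ℝ}
  {K : ℝ → (Fin n → ℝ) → (Fin 2 ⊕ Fin n) → (Fin 2 ⊕ Fin n) → ℝ}
  {pd : ℝ → (Fin n → ℝ) → (Fin 2 ⊕ Fin n) → (Fin 2 ⊕ Fin n) → (Fin 2 ⊕ Fin n) → ℝ}

theorem pd_eq_zero_of_forall_eq_zero (hpdt : ∀ r x μ ν, pd r x (inl 0) μ ν = 0)
    (hpdr : ∀ r x μ ν, pd r x (inl 1) μ ν = deriv (fun s => K s x μ ν) r)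
    (hpdx : ∀ r x k μ ν,
        pd r x (inr k) μ ν = fderiv ℝ (fun y => K r y μ ν) x (Pi.single k 1))
    {μ ν : Fin 2 ⊕ Fin n} (hK : ∀ s y, K s y μ ν = 0) (r : ℝ) (x : Fin n → ℝ)
    (ρ : Fin 2 ⊕ Fin n) : pd r x ρ μ ν = 0 := by
  obtain rfl | rfl | ⟨k, rfl⟩ := ρ.fin_two_trichotomy
  · exact hpdt r x μ ν
  · simp [hpdr, hK]
  · simp [hpdx, hK]

theorem pd_inl_one_inr_inr (hpdr : ∀ r x μ ν, pd r x (inl 1) μ ν = deriv (fun s => K s x μ ν) r)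
    (hKij : ∀ r x i j, K r x (inr i) (inr j) = r ^ 4 * γ x i j) (r : ℝ) (x : Fin n → ℝ)
    (i j : Fin n) : pd r x (inl 1) (inr i) (inr j) = 4 * r ^ 3 * γ x i j := by
  simp [hpdr, hKij]

theorem pd_inr_inr_inr (hpdx : ∀ r x k μ ν,
        pd r x (inr k) μ ν = fderiv ℝ (fun y => K r y μ ν) x (Pi.single k 1))
    (hKij : ∀ r x i j, K r x (inr i) (inr j) = r ^ 4 * γ x i j) (r : ℝ) (x : Fin n → ℝ)
    (k i j : Fin n) :
    pd r x (inr k) (inr i) (inr j)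
      = r ^ 4 * fderiv ℝ (fun y => γ y i j) x (Pi.single k 1) := by
  simp [hpdx, hKij, fderiv_const_mul_field]

theorem sum_christoffel_mul_eq_sum_inr (hKr : ∀ r x μ a, K r x μ (inl a) = 0) (r : ℝ)
    (x : Fin n → ℝ) (α β ν : Fin 2 ⊕ Fin n) :
    ∑ σ, Γ r x σ α β * K r x ν σ = ∑ l, Γ r x (inr l) α β * K r x ν (inr l) := by
  simp [Fintype.sum_sum_type, hKr]

theorem sum_christoffel_inl_one_inr_mul
    (hΓri : ∀ r x l i, Γ r x (inr l) (inl 1) (inr i) = r⁻¹ * (if l = i then 1 else 0))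
    (r : ℝ) (x : Fin n → ℝ) (i : Fin n) (c : Fin n → ℝ) :
    ∑ l, Γ r x (inr l) (inl 1) (inr i) * c l = r⁻¹ * c i := by
  simp [hΓri]

end WarpedProduct

theorem stmt16_general (n : ℕ)
    (γ : (Fin n → ℝ) → Fin n → Fin n → ℝ)
    (hγsymm : ∀ x i j, γ x i j = γ x j i)
    (Γγ : (Fin n → ℝ) → Fin n → Fin n → Fin n → ℝ)
    (hKoszul : ∀ x i j m,
        ∑ l, Γγ x l i j * γ x m l
          = (fderiv ℝ (fun y => γ y j m) x (Pi.single i 1)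
              + fderiv ℝ (fun y => γ y i m) x (Pi.single j 1)
              - fderiv ℝ (fun y => γ y i j) x (Pi.single m 1)) / 2)
    (Γ : ℝ → (Fin n → ℝ) → (Fin 2 ⊕ Fin n) → (Fin 2 ⊕ Fin n) → (Fin 2 ⊕ Fin n) → ℝ)
    (hΓsym : ∀ r x σ μ ν, Γ r x σ μ ν = Γ r x σ ν μ)
    (hΓt : ∀ r x l μ, Γ r x (inr l) (inl 0) μ = 0)
    (hΓrr : ∀ r x l, Γ r x (inr l) (inl 1) (inl 1) = 0)
    (hΓri : ∀ r x l i, Γ r x (inr l) (inl 1) (inr i) = r⁻¹ * (if l = i then 1 else 0))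
    (hΓij : ∀ r x l i j, Γ r x (inr l) (inr i) (inr j) = Γγ x l i j)
    (K : ℝ → (Fin n → ℝ) → (Fin 2 ⊕ Fin n) → (Fin 2 ⊕ Fin n) → ℝ)
    (hKij : ∀ r x i j, K r x (inr i) (inr j) = r^4 * γ x i j)
    (hKl : ∀ r x a ν, K r x (inl a) ν = 0)
    (hKr : ∀ r x μ a, K r x μ (inl a) = 0)
    (pd : ℝ → (Fin n → ℝ) → (Fin 2 ⊕ Fin n) → (Fin 2 ⊕ Fin n) → (Fin 2 ⊕ Fin n) → ℝ)
    (hpdt : ∀ r x μ ν, pd r x (inl 0) μ ν = 0)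
    (hpdr : ∀ r x μ ν, pd r x (inl 1) μ ν = deriv (fun s => K s x μ ν) r)
    (hpdx : ∀ r x k μ ν,
        pd r x (inr k) μ ν = fderiv ℝ (fun y => K r y μ ν) x (Pi.single k 1)) :
    ∀ (r : ℝ) (x : Fin n → ℝ), 0 < r →
      ∀ ρ μ ν : Fin 2 ⊕ Fin n,
        pd r x ρ μ ν + pd r x μ ν ρ + pd r x ν ρ μ
          = 2 * ∑ σ, (Γ r x σ ρ μ * K r x ν σ
              + Γ r x σ μ ν * K r x ρ σ
              + Γ r x σ ν ρ * K r x μ σ) := by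
  intro r x hr ρ μ ν
  have hpd_mid : ∀ ρ a ν, pd r x ρ (inl a) ν = 0 := fun ρ a ν =>
    pd_eq_zero_of_forall_eq_zero hpdt hpdr hpdx (fun s y => hKl s y a ν) r x ρ
  have hpd_right : ∀ ρ μ a, pd r x ρ μ (inl a) = 0 := fun ρ μ a =>
    pd_eq_zero_of_forall_eq_zero hpdt hpdr hpdx (fun s y => hKr s y μ a) r x ρ
  have hΓ_t : ∀ l μ, Γ r x (inr l) μ (inl 0) = 0 := fun l μ => hΓsym .. ▸ hΓt r x l μ
  have hΓ_ir : ∀ l i, Γ r x (inr l) (inr i) (inl 1) = Γ r x (inr l) (inl 1) (inr i) :=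
    fun l i => hΓsym ..
  rw [Finset.sum_add_distrib, Finset.sum_add_distrib]
  obtain rfl | rfl | ⟨k, rfl⟩ := ρ.fin_two_trichotomy <;>
  obtain rfl | rfl | ⟨i, rfl⟩ := μ.fin_two_trichotomy <;>
  obtain rfl | rfl | ⟨j, rfl⟩ := ν.fin_two_trichotomy <;>
  simp only [sum_christoffel_mul_eq_sum_inr hKr, hpdt, hpd_mid, hpd_right,
    pd_inl_one_inr_inr hpdr hKij, pd_inr_inr_inr hpdx hKij, hΓ_ir,
    sum_christoffel_inl_one_inr_mul hΓri, hΓt, hΓ_t, hΓrr, hΓij, hKl, hKij,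
    zero_mul, mul_zero, Finset.sum_const_zero, add_zero, zero_add]
  · rw [hγsymm x j i]; field_simp; ring
  · rw [hγsymm x k j]; field_simp; ring
  · rw [hγsymm x i k]; field_simp; ring
  · have hcyc := cyclic_sum_deriv_eq_of_koszul (γ x)
      (fun k i j => fderiv ℝ (fun y => γ y i j) x (Pi.single k 1)) (Γγ x)
      (fun k i j => by simp only [hγsymm _ i j]) (hKoszul x) k i j
    simp only [mul_left_comm _ (r ^ 4), ← Finset.mul_sum]
    linear_combination r ^ 4 * hcyc

open Sum in
/-- For the static warped metric
`g = -f(r)dt² + h(r)dr² + r² γ_{ij}(x)dx^i dx^j` on `ℝ × ℝ_{>0} × Σ`, the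
symmetric tensor `K_{ab} = r⁴ γ_{ab}` satisfies the rank-2 Killing tensor
equation `∇_{(c} K_{ab)} = 0`.  Coordinates are indexed by `Fin 2 ⊕ Fin n`
(`inl 0 = t`, `inl 1 = r`, `inr i = x^i`); the Christoffel symbols of `g`
relevant to the computation are `Γ^l_{tμ} = 0`, `Γ^l_{rr} = 0`,
`Γ^l_{ri} = r⁻¹ δ^l_i`, `Γ^l_{ij} = (γ-Christoffel)`, the latter characterized
by the Koszul identity; the Killing equation is expressed in components as
`∂_{(ρ}K_{μν)} - 2 Γ^σ_{(ρμ}K_{ν)σ} = 0`, i.e. (times 3)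
`∂_ρ K_{μν} + ∂_μ K_{νρ} + ∂_ν K_{ρμ}
   = 2 ∑_σ (Γ^σ_{ρμ}K_{νσ} + Γ^σ_{μν}K_{ρσ} + Γ^σ_{νρ}K_{μσ})`. -/
theorem stmt16 (n : ℕ)
    (γ : (Fin n → ℝ) → Fin n → Fin n → ℝ)
    (hγsymm : ∀ x i j, γ x i j = γ x j i)
    (hγdiff : ∀ i j, Differentiable ℝ (fun x => γ x i j))
    (Γγ : (Fin n → ℝ) → Fin n → Fin n → Fin n → ℝ)
    (hΓγsym : ∀ x l i j, Γγ x l i j = Γγ x l j i)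
    (hKoszul : ∀ x i j m,
        ∑ l, Γγ x l i j * γ x m l
          = (fderiv ℝ (fun y => γ y j m) x (Pi.single i 1)
              + fderiv ℝ (fun y => γ y i m) x (Pi.single j 1)
              - fderiv ℝ (fun y => γ y i j) x (Pi.single m 1)) / 2)
    (Γ : ℝ → (Fin n → ℝ) → (Fin 2 ⊕ Fin n) → (Fin 2 ⊕ Fin n) → (Fin 2 ⊕ Fin n) → ℝ)
    (hΓsym : ∀ r x σ μ ν, Γ r x σ μ ν = Γ r x σ ν μ)
    (hΓt : ∀ r x l μ, Γ r x (inr l) (inl 0) μ = 0)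
    (hΓrr : ∀ r x l, Γ r x (inr l) (inl 1) (inl 1) = 0)
    (hΓri : ∀ r x l i, Γ r x (inr l) (inl 1) (inr i) = r⁻¹ * (if l = i then 1 else 0))
    (hΓij : ∀ r x l i j, Γ r x (inr l) (inr i) (inr j) = Γγ x l i j)
    (K : ℝ → (Fin n → ℝ) → (Fin 2 ⊕ Fin n) → (Fin 2 ⊕ Fin n) → ℝ)
    (hKij : ∀ r x i j, K r x (inr i) (inr j) = r^4 * γ x i j)
    (hKl : ∀ r x a ν, K r x (inl a) ν = 0)
    (hKr : ∀ r x μ a, K r x μ (inl a) = 0)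
    (pd : ℝ → (Fin n → ℝ) → (Fin 2 ⊕ Fin n) → (Fin 2 ⊕ Fin n) → (Fin 2 ⊕ Fin n) → ℝ)
    (hpdt : ∀ r x μ ν, pd r x (inl 0) μ ν = 0)
    (hpdr : ∀ r x μ ν, pd r x (inl 1) μ ν = deriv (fun s => K s x μ ν) r)
    (hpdx : ∀ r x k μ ν,
        pd r x (inr k) μ ν = fderiv ℝ (fun y => K r y μ ν) x (Pi.single k 1)) :
    ∀ (r : ℝ) (x : Fin n → ℝ), 0 < r →
      ∀ ρ μ ν : Fin 2 ⊕ Fin n,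
        pd r x ρ μ ν + pd r x μ ν ρ + pd r x ν ρ μ
          = 2 * ∑ σ, (Γ r x σ ρ μ * K r x ν σ
              + Γ r x σ μ ν * K r x ρ σ
              + Γ r x σ ν ρ * K r x μ σ) :=
  stmt16_general n γ hγsymm Γγ hKoszul Γ hΓsym hΓt hΓrr hΓri hΓij K hKij hKl hKr pd hpdt hpdr hpdx
end

section
/- For D ≥ 4, k = 0, M > 0, Q ≠ 0, and r_p^(D-3) = (D-2)Q^2/((D-1)M), the timelike condition f(r_p) > 0 with f(r) = -2Λr^2/((D-2)(D-1)) - 2M/r^(D-3) + Q^2/r^(2(D-3)) holds if and only if Λ·M^(2/(D-3)) < -((D-3)(D-1)^2/(2(D-2)))·((D-1)/(D-2))^(2/(D-3))·(|Q|/M)^(-2(D-1)/(D-3)). -/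
/-!
On the photon surface `r_p^(D-3) = A := (D-2)Q²/((D-1)M)` the two charge terms of `f` collapse to
`-2/((D-2)(D-1)) · c M²/Q²` with `c = (D-3)(D-1)²/(2(D-2))`, so `f(r_p) > 0` reads
`Λ r_p² < -c M²/Q²`. Multiplying by `(M/A)^(2/(D-3)) = M^(2/(D-3)) / r_p²` turns the left side into
`Λ M^(2/(D-3))`, and `(M/A)^(2/(D-3)) · M²/Q²` is the stated power of `|Q|/M`.
-/

open Real

lemma rpow_one_div_pow {A s : ℝ} {n : ℕ} (hA : 0 ≤ A) (hn : n ≠ 0) (hs : (n : ℝ) = s) :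
    (A ^ (1 / s)) ^ n = A := by
  subst hs
  rw [one_div]
  exact rpow_inv_natCast_pow hA hn

lemma rpow_one_div_sq {A : ℝ} (hA : 0 ≤ A) (s : ℝ) : (A ^ (1 / s)) ^ 2 = A ^ (2 / s) := by
  rw [← rpow_natCast, ← rpow_mul hA]
  congr 1
  push_cast
  ring

lemma charge_terms_at_photon_radius {d : ℝ} (hd1 : d - 1 ≠ 0) (hd2 : d - 2 ≠ 0) (Λ M Q X : ℝ) :
    -2 * Λ * X / ((d - 2) * (d - 1)) - 2 * M / ((d - 2) * Q ^ 2 / ((d - 1) * M))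
        + Q ^ 2 / ((d - 2) * Q ^ 2 / ((d - 1) * M)) ^ 2
      = -2 / ((d - 2) * (d - 1))
          * (Λ * X + (d - 3) * (d - 1) ^ 2 / (2 * (d - 2)) * (M ^ 2 / Q ^ 2)) := by
  field_simp
  ring

lemma rpow_div_rpow_mul_sq_div_sq {b c M Q : ℝ} (hb : 0 < b) (hc : 0 < c) (hM : 0 < M)
    (hQ : Q ≠ 0) (e : ℝ) :
    M ^ e / (b * Q ^ 2 / (c * M)) ^ e * (M ^ 2 / Q ^ 2)
      = (c / b) ^ e * (|Q| / M) ^ (-(2 * e + 2)) := by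
  have hq : 0 < |Q| / M := div_pos (abs_pos.mpr hQ) hM
  have hinv : M ^ 2 / Q ^ 2 = (|Q| / M) ^ (-2 : ℝ) := by
    rw [rpow_neg hq.le, rpow_two, ← sq_abs Q]
    field_simp
  have hratio : M / (b * Q ^ 2 / (c * M)) = c / b * (|Q| / M) ^ (-2 : ℝ) := by
    rw [← hinv]
    field_simp
  rw [← div_rpow hM.le (by positivity), hratio, hinv, mul_rpow (by positivity) (by positivity),
    ← rpow_mul hq.le, mul_assoc, ← rpow_add hq]
  congr 2
  ring

lemma pos_neg_two_div_mul_iff {p X m : ℝ} (hp : 0 < p) (hX : 0 < X) (hm : 0 < m) (Λ c B : ℝ) :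
    0 < -2 / p * (Λ * X + c * B) ↔ Λ * m < -c * (m / X * B) := by
  have hY : -c * (m / X * B) - Λ * m = m / X * -(Λ * X + c * B) := by
    field_simp
    ring
  rw [neg_div, neg_mul, ← mul_neg, mul_pos_iff_of_pos_left (by positivity : 0 < 2 / p),
    ← sub_pos (b := Λ * m), hY, mul_pos_iff_of_pos_left (by positivity : 0 < m / X)]

/-- For `k = 0`, `M > 0`, `Q ≠ 0`, and
`r_p^(D-3) = (D-2)Q²/((D-1)M)`, the timelike condition `f(r_p) > 0` with
`f(r) = -2Λr²/((D-2)(D-1)) - 2M/r^(D-3) + Q²/r^(2(D-3))` holds iff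
`Λ M^(2/(D-3)) < -((D-3)(D-1)²/(2(D-2))) ((D-1)/(D-2))^(2/(D-3)) (|Q|/M)^(-2(D-1)/(D-3))`. -/
theorem stmt18 (D : ℕ) (hD : 4 ≤ D) (Λ M Q : ℝ) (hM : 0 < M) (hQ : Q ≠ 0) :
    let rp : ℝ := (((D:ℝ)-2)*Q^2/(((D:ℝ)-1)*M)) ^ ((1:ℝ)/((D:ℝ)-3))
    (0 < -2*Λ*rp^2/(((D:ℝ)-2)*((D:ℝ)-1)) - 2*M/rp^(D-3) + Q^2/rp^(2*(D-3))
      ↔ Λ * M ^ ((2:ℝ)/((D:ℝ)-3))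
          < -(((D:ℝ)-3)*((D:ℝ)-1)^2/(2*((D:ℝ)-2)))
              * (((D:ℝ)-1)/((D:ℝ)-2)) ^ ((2:ℝ)/((D:ℝ)-3))
              * ( |Q| / M ) ^ (-2*((D:ℝ)-1)/((D:ℝ)-3))) := by
  intro rp
  have hd : (4 : ℝ) ≤ D := by exact_mod_cast hD
  have hA : 0 < ((D:ℝ)-2)*Q^2/(((D:ℝ)-1)*M) :=
    div_pos (mul_pos (by linarith) (by positivity)) (mul_pos (by linarith) hM)
  have hs : ((D - 3 : ℕ) : ℝ) = (D:ℝ) - 3 := by rw [Nat.cast_sub (by omega)]; norm_num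
  have hn : D - 3 ≠ 0 := by omega
  have hexp : -2*((D:ℝ)-1)/((D:ℝ)-3) = -(2 * (2/((D:ℝ)-3)) + 2) := by
    field_simp [show (D:ℝ) - 3 ≠ 0 by linarith]
    ring
  simp only [rp]
  rw [pow_mul', rpow_one_div_pow hA.le hn hs, rpow_one_div_sq hA.le,
    charge_terms_at_photon_radius (by linarith) (by linarith), hexp, mul_assoc,
    ← rpow_div_rpow_mul_sq_div_sq (by linarith) (by linarith) hM hQ]
  exact pos_neg_two_div_mul_iff (by nlinarith) (rpow_pos_of_pos hA _) (rpow_pos_of_pos hM _) _ _ _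
end
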